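/- (Corollary 3.2, identity (3.8): the second differential Fay identity of the KP-mKP hierarchy.) Suppose τ₁, τ₂ : (ℕ → ℂ) × (ℕ → ℂ) → ℂ are continuous and shift-smooth, and that (τ₁, τ₂) satisfies the KP-mKP Fay identity. Then for all x, y : ℕ → ℂ and all nonzero a, b ∈ ℂ: ∂₂τ₁(x − [a], y + [b]) · τ₂(x,y) − τ₁(x − [a], y + [b]) · ∂₂τ₂(x,y) = (1/b) · ( τ₁(x − [a], y + [b]) · τ₂(x,y) − τ₂(x, y + [b]) · τ₁(x − [a], y) ). -/

import Mathlib

/-- The shift `[s] : ℕ → ℂ`, `[s](k) = s^(k+1)/(k+1)`, representing the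
sequence `(s, s²/2, s³/3, …)` of time variables. -/
noncomputable def sh (s : ℂ) : ℕ → ℂ := fun k => s ^ (k + 1) / ((k : ℂ) + 1)

/-- `∂₁ f (x, y)`: derivative of `s ↦ f(x + [s], y)` at `s = 0`. -/
noncomputable def d1 (f : (ℕ → ℂ) × (ℕ → ℂ) → ℂ) (x y : ℕ → ℂ) : ℂ :=
  deriv (fun s : ℂ => f (x + sh s, y)) 0

/-- `∂₂ f (x, y)`: derivative of `s ↦ f(x, y + [s])` at `s = 0`. -/
noncomputable def d2 (f : (ℕ → ℂ) × (ℕ → ℂ) → ℂ) (x y : ℕ → ℂ) : ℂ :=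
  deriv (fun s : ℂ => f (x, y + sh s)) 0

/-- `f` is shift-smooth: for every `(x, y)` the maps `s ↦ f(x + [s], y)` and
`s ↦ f(x, y + [s])` are differentiable on all of ℂ, and the maps
`(s, x, y) ↦ (d/ds) f(x + [s], y)` and `(s, x, y) ↦ (d/ds) f(x, y + [s])`
are jointly continuous. -/
def ShiftSmooth (f : (ℕ → ℂ) × (ℕ → ℂ) → ℂ) : Prop :=
  (∀ x y : ℕ → ℂ, Differentiable ℂ (fun s : ℂ => f (x + sh s, y))) ∧
  (∀ x y : ℕ → ℂ, Differentiable ℂ (fun s : ℂ => f (x, y + sh s))) ∧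
  Continuous (fun q : ℂ × ((ℕ → ℂ) × (ℕ → ℂ)) =>
    deriv (fun s : ℂ => f (q.2.1 + sh s, q.2.2)) q.1) ∧
  Continuous (fun q : ℂ × ((ℕ → ℂ) × (ℕ → ℂ)) =>
    deriv (fun s : ℂ => f (q.2.1, q.2.2 + sh s)) q.1)

/-- The KP-mKP Fay identity (equation (3.1) of the paper) for a pair of tau
functions `(τ₁, τ₂)`. -/
def KPmKPFay (τ₁ τ₂ : (ℕ → ℂ) × (ℕ → ℂ) → ℂ) : Prop :=
  ∀ x y : ℕ → ℂ, ∀ s0 s1 s2 s3 t0 t1 t2 t3 : ℂ,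
    s0 ≠ 0 → s1 ≠ 0 → s2 ≠ 0 → s3 ≠ 0 →
    s0 ≠ s1 → s0 ≠ s2 → s0 ≠ s3 → s1 ≠ s2 → s1 ≠ s3 → s2 ≠ s3 →
    t0 ≠ 0 → t1 ≠ 0 → t2 ≠ 0 → t3 ≠ 0 →
    t0 ≠ t1 → t0 ≠ t2 → t0 ≠ t3 → t1 ≠ t2 → t1 ≠ t3 → t2 ≠ t3 →
    (s1 * (s1 - s0) / ((s1 - s2) * (s1 - s3)))
        * τ₁ (x + sh s2 + sh s3, y + sh t1 + sh t2 + sh t3)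
        * τ₂ (x + sh s0 + sh s1, y + sh t0)
      + (s2 * (s2 - s0) / ((s2 - s3) * (s2 - s1)))
        * τ₁ (x + sh s3 + sh s1, y + sh t1 + sh t2 + sh t3)
        * τ₂ (x + sh s0 + sh s2, y + sh t0)
      + (s3 * (s3 - s0) / ((s3 - s1) * (s3 - s2)))
        * τ₁ (x + sh s1 + sh s2, y + sh t1 + sh t2 + sh t3)
        * τ₂ (x + sh s0 + sh s3, y + sh t0)
    = (t1 * (t1 - t0) / ((t1 - t2) * (t1 - t3)))
        * τ₂ (x + sh s1 + sh s2 + sh s3, y + sh t2 + sh t3)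
        * τ₁ (x + sh s0, y + sh t0 + sh t1)
      + (t2 * (t2 - t0) / ((t2 - t3) * (t2 - t1)))
        * τ₂ (x + sh s1 + sh s2 + sh s3, y + sh t3 + sh t1)
        * τ₁ (x + sh s0, y + sh t0 + sh t2)
      + (t3 * (t3 - t0) / ((t3 - t1) * (t3 - t2)))
        * τ₂ (x + sh s1 + sh s2 + sh s3, y + sh t1 + sh t2)
        * τ₁ (x + sh s0, y + sh t0 + sh t3)

set_option maxRecDepth 10000
set_option maxHeartbeats 2000000

lemma sh_zero : sh 0 = 0 := by funext k; simp [sh]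

lemma sh_cont : Continuous sh := continuous_pi fun k => (continuous_pow (k+1)).div_const _

open Filter Topology in
lemma lim0 {g : ℂ → ℂ} {c1 c2 c3 c4 : ℂ} (h1 : c1 ≠ 0) (h2 : c2 ≠ 0) (h3 : c3 ≠ 0)
    (h4 : c4 ≠ 0) (hg : ContinuousAt g 0)
    (h : ∀ ε : ℂ, ε ≠ 0 → ε ≠ c1 → ε ≠ c2 → ε ≠ c3 → ε ≠ c4 → g ε = 0) : g 0 = 0 := by
  have hev : ∀ᶠ ε in 𝓝[≠] (0:ℂ), g ε = 0 := by
    have e1 : ∀ᶠ ε in 𝓝 (0:ℂ), ε ≠ c1 := eventually_ne_nhds (Ne.symm h1)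
    have e2 : ∀ᶠ ε in 𝓝 (0:ℂ), ε ≠ c2 := eventually_ne_nhds (Ne.symm h2)
    have e3 : ∀ᶠ ε in 𝓝 (0:ℂ), ε ≠ c3 := eventually_ne_nhds (Ne.symm h3)
    have e4 : ∀ᶠ ε in 𝓝 (0:ℂ), ε ≠ c4 := eventually_ne_nhds (Ne.symm h4)
    filter_upwards [self_mem_nhdsWithin,
      ((e1.and (e2.and (e3.and e4))).filter_mono nhdsWithin_le_nhds)] with ε hε0 hc
    exact h ε hε0 hc.1 hc.2.1 hc.2.2.1 hc.2.2.2
  exact tendsto_nhds_unique hg.continuousWithinAt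
    (Filter.Tendsto.congr' (Filter.EventuallyEq.symm hev) tendsto_const_nhds)

/-- Corollary 3.2, identity (3.8): the second differential Fay
identity of the KP-mKP hierarchy. -/
theorem diffFay_two (τ₁ τ₂ : (ℕ → ℂ) × (ℕ → ℂ) → ℂ)
    (hc1 : Continuous τ₁) (hc2 : Continuous τ₂)
    (hs1 : ShiftSmooth τ₁) (hs2 : ShiftSmooth τ₂)
    (hFay : KPmKPFay τ₁ τ₂) :
    ∀ x y : ℕ → ℂ, ∀ a b : ℂ, a ≠ 0 → b ≠ 0 →
      d2 τ₁ (x - sh a) (y + sh b) * τ₂ (x, y)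
        - τ₁ (x - sh a, y + sh b) * d2 τ₂ x y
      = (1 / b) * (τ₁ (x - sh a, y + sh b) * τ₂ (x, y)
          - τ₂ (x, y + sh b) * τ₁ (x - sh a, y)) := by
  intro x y a b ha hb
  have hshc : Continuous sh := sh_cont
  -- Step 0: the Fay identity at (x - sh a, y) with s1 := a, t1 := b, denominators cleared.
  have E0 : ∀ s0 s2 s3 t0 t2 t3 : ℂ, s0 ≠ 0 → s2 ≠ 0 → s3 ≠ 0 → s0 ≠ a → s0 ≠ s2 → s0 ≠ s3 →
      a ≠ s2 → a ≠ s3 → s2 ≠ s3 → t0 ≠ 0 → t2 ≠ 0 → t3 ≠ 0 → t0 ≠ b → t0 ≠ t2 → t0 ≠ t3 →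
      b ≠ t2 → b ≠ t3 → t2 ≠ t3 →
      (b-t2)*(b-t3)*(t2-t3) *
        ( a*(a-s0)*(s2-s3) * (τ₁ (x - sh a + sh s2 + sh s3, y + sh b + sh t2 + sh t3)
            * τ₂ (x + sh s0, y + sh t0))
        - s2*(s2-s0)*(a-s3) * (τ₁ (x + sh s3, y + sh b + sh t2 + sh t3)
            * τ₂ (x - sh a + sh s0 + sh s2, y + sh t0))
        + s3*(s3-s0)*(a-s2) * (τ₁ (x + sh s2, y + sh b + sh t2 + sh t3)
            * τ₂ (x - sh a + sh s0 + sh s3, y + sh t0)) )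
      = (a-s2)*(a-s3)*(s2-s3) *
        ( b*(b-t0)*(t2-t3) * (τ₂ (x + sh s2 + sh s3, y + sh t2 + sh t3)
            * τ₁ (x - sh a + sh s0, y + sh t0 + sh b))
        - t2*(t2-t0)*(b-t3) * (τ₂ (x + sh s2 + sh s3, y + sh t3 + sh b)
            * τ₁ (x - sh a + sh s0, y + sh t0 + sh t2))
        + t3*(t3-t0)*(b-t2) * (τ₂ (x + sh s2 + sh s3, y + sh b + sh t2)
            * τ₁ (x - sh a + sh s0, y + sh t0 + sh t3)) ) := by
    intro s0 s2 s3 t0 t2 t3 hs0 hs2 hs3 h0a h02 h03 ha2 ha3 h23 ht0 ht2 ht3 h0b h0t2 h0t3 hb2 hb3 ht23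
    have h := hFay (x - sh a) y s0 a s2 s3 t0 b t2 t3 hs0 ha hs2 hs3 h0a h02 h03 ha2 ha3 h23
      ht0 hb ht2 ht3 h0b h0t2 h0t3 hb2 hb3 ht23
    rw [show x - sh a + sh s0 + sh a = x + sh s0 from by abel,
        show x - sh a + sh s3 + sh a = x + sh s3 from by abel,
        show x - sh a + sh a + sh s2 = x + sh s2 from by abel] at h
    have d1 : a - s2 ≠ 0 := sub_ne_zero.mpr ha2
    have d2 : a - s3 ≠ 0 := sub_ne_zero.mpr ha3
    have d3 : s2 - s3 ≠ 0 := sub_ne_zero.mpr h23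
    have d4 : s2 - a ≠ 0 := sub_ne_zero.mpr (Ne.symm ha2)
    have d5 : s3 - a ≠ 0 := sub_ne_zero.mpr (Ne.symm ha3)
    have d6 : s3 - s2 ≠ 0 := sub_ne_zero.mpr (Ne.symm h23)
    have e1 : b - t2 ≠ 0 := sub_ne_zero.mpr hb2
    have e2 : b - t3 ≠ 0 := sub_ne_zero.mpr hb3
    have e3 : t2 - t3 ≠ 0 := sub_ne_zero.mpr ht23
    have e4 : t2 - b ≠ 0 := sub_ne_zero.mpr (Ne.symm hb2)
    have e5 : t3 - b ≠ 0 := sub_ne_zero.mpr (Ne.symm hb3)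
    have e6 : t3 - t2 ≠ 0 := sub_ne_zero.mpr (Ne.symm ht23)
    simp only [mul_assoc] at h
    set p1 := τ₁ (x - sh a + sh s2 + sh s3, y + sh b + sh t2 + sh t3) * τ₂ (x + sh s0, y + sh t0) with hp1
    set p2 := τ₁ (x + sh s3, y + sh b + sh t2 + sh t3) * τ₂ (x - sh a + sh s0 + sh s2, y + sh t0) with hp2
    set p3 := τ₁ (x + sh s2, y + sh b + sh t2 + sh t3) * τ₂ (x - sh a + sh s0 + sh s3, y + sh t0) with hp3
    set q1 := τ₂ (x + sh s2 + sh s3, y + sh t2 + sh t3) * τ₁ (x - sh a + sh s0, y + sh t0 + sh b) with hq1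
    set q2 := τ₂ (x + sh s2 + sh s3, y + sh t3 + sh b) * τ₁ (x - sh a + sh s0, y + sh t0 + sh t2) with hq2
    set q3 := τ₂ (x + sh s2 + sh s3, y + sh b + sh t2) * τ₁ (x - sh a + sh s0, y + sh t0 + sh t3) with hq3
    have hM : (a-s2)*(a-s3)*(s2-s3) ≠ 0 := mul_ne_zero (mul_ne_zero d1 d2) d3
    have hN : (b-t2)*(b-t3)*(t2-t3) ≠ 0 := mul_ne_zero (mul_ne_zero e1 e2) e3
    have r1 : a * (a - s0) / ((a - s2) * (a - s3)) * p1
        = a*(a-s0)*(s2-s3)*p1 / ((a-s2)*(a-s3)*(s2-s3)) := by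
      rw [div_mul_eq_mul_div, div_eq_div_iff (mul_ne_zero d1 d2) hM]; ring
    have r2 : s2 * (s2 - s0) / ((s2 - s3) * (s2 - a)) * p2
        = -(s2*(s2-s0)*(a-s3)*p2) / ((a-s2)*(a-s3)*(s2-s3)) := by
      rw [div_mul_eq_mul_div, div_eq_div_iff (mul_ne_zero d3 d4) hM]; ring
    have r3 : s3 * (s3 - s0) / ((s3 - a) * (s3 - s2)) * p3
        = s3*(s3-s0)*(a-s2)*p3 / ((a-s2)*(a-s3)*(s2-s3)) := by
      rw [div_mul_eq_mul_div, div_eq_div_iff (mul_ne_zero d5 d6) hM]; ring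
    have r4 : b * (b - t0) / ((b - t2) * (b - t3)) * q1
        = b*(b-t0)*(t2-t3)*q1 / ((b-t2)*(b-t3)*(t2-t3)) := by
      rw [div_mul_eq_mul_div, div_eq_div_iff (mul_ne_zero e1 e2) hN]; ring
    have r5 : t2 * (t2 - t0) / ((t2 - t3) * (t2 - b)) * q2
        = -(t2*(t2-t0)*(b-t3)*q2) / ((b-t2)*(b-t3)*(t2-t3)) := by
      rw [div_mul_eq_mul_div, div_eq_div_iff (mul_ne_zero e3 e4) hN]; ring
    have r6 : t3 * (t3 - t0) / ((t3 - b) * (t3 - t2)) * q3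
        = t3*(t3-t0)*(b-t2)*q3 / ((b-t2)*(b-t3)*(t2-t3)) := by
      rw [div_mul_eq_mul_div, div_eq_div_iff (mul_ne_zero e5 e6) hN]; ring
    rw [r1, r2, r3, r4, r5, r6] at h
    simp only [← add_div] at h
    rw [div_eq_div_iff hM hN] at h
    linear_combination h
  -- Step 1: limit s3 → 0 (cancelling a*s2)
  have E1 : ∀ s0 s2 t0 t2 t3 : ℂ, s0 ≠ 0 → s2 ≠ 0 → s0 ≠ a → s0 ≠ s2 → a ≠ s2 →
      t0 ≠ 0 → t2 ≠ 0 → t3 ≠ 0 → t0 ≠ b → t0 ≠ t2 → t0 ≠ t3 → b ≠ t2 → b ≠ t3 → t2 ≠ t3 →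
      (b-t2)*(b-t3)*(t2-t3) *
        ( (a-s0) * (τ₁ (x - sh a + sh s2, y + sh b + sh t2 + sh t3)
            * τ₂ (x + sh s0, y + sh t0))
        - (s2-s0) * (τ₁ (x, y + sh b + sh t2 + sh t3)
            * τ₂ (x - sh a + sh s0 + sh s2, y + sh t0)) )
      = (a-s2) *
        ( b*(b-t0)*(t2-t3) * (τ₂ (x + sh s2, y + sh t2 + sh t3)
            * τ₁ (x - sh a + sh s0, y + sh t0 + sh b))
        - t2*(t2-t0)*(b-t3) * (τ₂ (x + sh s2, y + sh t3 + sh b)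
            * τ₁ (x - sh a + sh s0, y + sh t0 + sh t2))
        + t3*(t3-t0)*(b-t2) * (τ₂ (x + sh s2, y + sh b + sh t2)
            * τ₁ (x - sh a + sh s0, y + sh t0 + sh t3)) ) := by
    intro s0 s2 t0 t2 t3 hs0 hs2 h0a h02 ha2 ht0 ht2 ht3 h0b h0t2 h0t3 hb2 hb3 ht23
    have h0 := lim0 (g := fun ε : ℂ =>
      (b-t2)*(b-t3)*(t2-t3) *
        ( a*(a-s0)*(s2-ε) * (τ₁ (x - sh a + sh s2 + sh ε, y + sh b + sh t2 + sh t3)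
            * τ₂ (x + sh s0, y + sh t0))
        - s2*(s2-s0)*(a-ε) * (τ₁ (x + sh ε, y + sh b + sh t2 + sh t3)
            * τ₂ (x - sh a + sh s0 + sh s2, y + sh t0))
        + ε*(ε-s0)*(a-s2) * (τ₁ (x + sh s2, y + sh b + sh t2 + sh t3)
            * τ₂ (x - sh a + sh s0 + sh ε, y + sh t0)) )
      - (a-s2)*(a-ε)*(s2-ε) *
        ( b*(b-t0)*(t2-t3) * (τ₂ (x + sh s2 + sh ε, y + sh t2 + sh t3)
            * τ₁ (x - sh a + sh s0, y + sh t0 + sh b))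
        - t2*(t2-t0)*(b-t3) * (τ₂ (x + sh s2 + sh ε, y + sh t3 + sh b)
            * τ₁ (x - sh a + sh s0, y + sh t0 + sh t2))
        + t3*(t3-t0)*(b-t2) * (τ₂ (x + sh s2 + sh ε, y + sh b + sh t2)
            * τ₁ (x - sh a + sh s0, y + sh t0 + sh t3)) ))
      hs0 ha hs2 hs2 (Continuous.continuousAt (by fun_prop))
      (fun ε hε h1 h2 h3 _ => by
        linear_combination E0 s0 s2 ε t0 t2 t3 hs0 hs2 hε h0a h02 (Ne.symm h1) ha2 (Ne.symm h2)
          (Ne.symm h3) ht0 ht2 ht3 h0b h0t2 h0t3 hb2 hb3 ht23)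
    simp only [sh_zero, add_zero] at h0
    apply mul_left_cancel₀ (mul_ne_zero ha hs2)
    linear_combination h0
  -- Step 2: limit s2 → 0
  have E2 : ∀ s0 t0 t2 t3 : ℂ, s0 ≠ 0 → s0 ≠ a →
      t0 ≠ 0 → t2 ≠ 0 → t3 ≠ 0 → t0 ≠ b → t0 ≠ t2 → t0 ≠ t3 → b ≠ t2 → b ≠ t3 → t2 ≠ t3 →
      (b-t2)*(b-t3)*(t2-t3) *
        ( (a-s0) * (τ₁ (x - sh a, y + sh b + sh t2 + sh t3) * τ₂ (x + sh s0, y + sh t0))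
        + s0 * (τ₁ (x, y + sh b + sh t2 + sh t3) * τ₂ (x - sh a + sh s0, y + sh t0)) )
      = a *
        ( b*(b-t0)*(t2-t3) * (τ₂ (x, y + sh t2 + sh t3) * τ₁ (x - sh a + sh s0, y + sh t0 + sh b))
        - t2*(t2-t0)*(b-t3) * (τ₂ (x, y + sh t3 + sh b) * τ₁ (x - sh a + sh s0, y + sh t0 + sh t2))
        + t3*(t3-t0)*(b-t2) * (τ₂ (x, y + sh b + sh t2) * τ₁ (x - sh a + sh s0, y + sh t0 + sh t3)) ) := by
    intro s0 t0 t2 t3 hs0 h0a ht0 ht2 ht3 h0b h0t2 h0t3 hb2 hb3 ht23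
    have h0 := lim0 (g := fun ε : ℂ =>
      (b-t2)*(b-t3)*(t2-t3) *
        ( (a-s0) * (τ₁ (x - sh a + sh ε, y + sh b + sh t2 + sh t3)
            * τ₂ (x + sh s0, y + sh t0))
        - (ε-s0) * (τ₁ (x, y + sh b + sh t2 + sh t3)
            * τ₂ (x - sh a + sh s0 + sh ε, y + sh t0)) )
      - (a-ε) *
        ( b*(b-t0)*(t2-t3) * (τ₂ (x + sh ε, y + sh t2 + sh t3)
            * τ₁ (x - sh a + sh s0, y + sh t0 + sh b))
        - t2*(t2-t0)*(b-t3) * (τ₂ (x + sh ε, y + sh t3 + sh b)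
            * τ₁ (x - sh a + sh s0, y + sh t0 + sh t2))
        + t3*(t3-t0)*(b-t2) * (τ₂ (x + sh ε, y + sh b + sh t2)
            * τ₁ (x - sh a + sh s0, y + sh t0 + sh t3)) ))
      hs0 ha ha ha (Continuous.continuousAt (by fun_prop))
      (fun ε hε h1 h2 _ _ => by
        linear_combination E1 s0 ε t0 t2 t3 hs0 hε h0a (Ne.symm h1) (Ne.symm h2)
          ht0 ht2 ht3 h0b h0t2 h0t3 hb2 hb3 ht23)
    simp only [sh_zero, add_zero] at h0
    linear_combination h0
  -- Step 3: limit s0 → 0 (cancelling a)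
  have E3 : ∀ t0 t2 t3 : ℂ,
      t0 ≠ 0 → t2 ≠ 0 → t3 ≠ 0 → t0 ≠ b → t0 ≠ t2 → t0 ≠ t3 → b ≠ t2 → b ≠ t3 → t2 ≠ t3 →
      (b-t2)*(b-t3)*(t2-t3) * (τ₁ (x - sh a, y + sh b + sh t2 + sh t3) * τ₂ (x, y + sh t0))
      = b*(b-t0)*(t2-t3) * (τ₂ (x, y + sh t2 + sh t3) * τ₁ (x - sh a, y + sh t0 + sh b))
        - t2*(t2-t0)*(b-t3) * (τ₂ (x, y + sh t3 + sh b) * τ₁ (x - sh a, y + sh t0 + sh t2))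
        + t3*(t3-t0)*(b-t2) * (τ₂ (x, y + sh b + sh t2) * τ₁ (x - sh a, y + sh t0 + sh t3)) := by
    intro t0 t2 t3 ht0 ht2 ht3 h0b h0t2 h0t3 hb2 hb3 ht23
    have h0 := lim0 (g := fun ε : ℂ =>
      (b-t2)*(b-t3)*(t2-t3) *
        ( (a-ε) * (τ₁ (x - sh a, y + sh b + sh t2 + sh t3) * τ₂ (x + sh ε, y + sh t0))
        + ε * (τ₁ (x, y + sh b + sh t2 + sh t3) * τ₂ (x - sh a + sh ε, y + sh t0)) )
      - a *
        ( b*(b-t0)*(t2-t3) * (τ₂ (x, y + sh t2 + sh t3) * τ₁ (x - sh a + sh ε, y + sh t0 + sh b))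
        - t2*(t2-t0)*(b-t3) * (τ₂ (x, y + sh t3 + sh b) * τ₁ (x - sh a + sh ε, y + sh t0 + sh t2))
        + t3*(t3-t0)*(b-t2) * (τ₂ (x, y + sh b + sh t2) * τ₁ (x - sh a + sh ε, y + sh t0 + sh t3)) ))
      ha ha ha ha (Continuous.continuousAt (by fun_prop))
      (fun ε hε h1 _ _ _ => by
        linear_combination E2 ε t0 t2 t3 hε h1 ht0 ht2 ht3 h0b h0t2 h0t3 hb2 hb3 ht23)
    simp only [sh_zero, add_zero] at h0
    apply mul_left_cancel₀ ha
    linear_combination h0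
  -- Step 4: limit t3 → 0 (cancelling b*t2)
  have E4 : ∀ t0 t2 : ℂ, t0 ≠ 0 → t2 ≠ 0 → t0 ≠ b → t0 ≠ t2 → b ≠ t2 →
      (b-t2) * (τ₁ (x - sh a, y + sh b + sh t2) * τ₂ (x, y + sh t0))
      = (b-t0) * (τ₂ (x, y + sh t2) * τ₁ (x - sh a, y + sh t0 + sh b))
        - (t2-t0) * (τ₂ (x, y + sh b) * τ₁ (x - sh a, y + sh t0 + sh t2)) := by
    intro t0 t2 ht0 ht2 h0b h0t2 hb2
    have h0 := lim0 (g := fun ε : ℂ =>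
      (b-t2)*(b-ε)*(t2-ε) * (τ₁ (x - sh a, y + sh b + sh t2 + sh ε) * τ₂ (x, y + sh t0))
      - ( b*(b-t0)*(t2-ε) * (τ₂ (x, y + sh t2 + sh ε) * τ₁ (x - sh a, y + sh t0 + sh b))
        - t2*(t2-t0)*(b-ε) * (τ₂ (x, y + sh ε + sh b) * τ₁ (x - sh a, y + sh t0 + sh t2))
        + ε*(ε-t0)*(b-t2) * (τ₂ (x, y + sh b + sh t2) * τ₁ (x - sh a, y + sh t0 + sh ε)) ))
      ht0 hb ht2 ht2 (Continuous.continuousAt (by fun_prop))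
      (fun ε hε h1 h2 h3 _ => by
        linear_combination E3 t0 t2 ε ht0 ht2 hε h0b h0t2 (Ne.symm h1) hb2 (Ne.symm h2)
          (Ne.symm h3))
    simp only [sh_zero, add_zero] at h0
    apply mul_left_cancel₀ (mul_ne_zero hb ht2)
    linear_combination h0
  -- Step 5: limit t2 → 0
  have E5 : ∀ t0 : ℂ, t0 ≠ 0 → t0 ≠ b →
      b * (τ₁ (x - sh a, y + sh b) * τ₂ (x, y + sh t0))
      = (b-t0) * (τ₂ (x, y) * τ₁ (x - sh a, y + sh t0 + sh b))
        + t0 * (τ₂ (x, y + sh b) * τ₁ (x - sh a, y + sh t0)) := by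
    intro t0 ht0 h0b
    have h0 := lim0 (g := fun ε : ℂ =>
      (b-ε) * (τ₁ (x - sh a, y + sh b + sh ε) * τ₂ (x, y + sh t0))
      - ( (b-t0) * (τ₂ (x, y + sh ε) * τ₁ (x - sh a, y + sh t0 + sh b))
        - (ε-t0) * (τ₂ (x, y + sh b) * τ₁ (x - sh a, y + sh t0 + sh ε)) ))
      ht0 hb hb hb (Continuous.continuousAt (by fun_prop))
      (fun ε hε h1 h2 _ _ => by
        linear_combination E4 t0 ε ht0 hε h0b (Ne.symm h1) (Ne.symm h2))
    simp only [sh_zero, add_zero] at h0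
    linear_combination h0
    -- Final step: differentiate at t0 = 0
  have hd2t2 : HasDerivAt (fun ε : ℂ => τ₂ (x, y + sh ε)) (d2 τ₂ x y) 0 :=
    ((hs2.2.1 x y) 0).hasDerivAt
  have hd1b : HasDerivAt (fun ε : ℂ => τ₁ (x - sh a, y + sh b + sh ε))
      (d2 τ₁ (x - sh a) (y + sh b)) 0 := ((hs1.2.1 (x - sh a) (y + sh b)) 0).hasDerivAt
  have hd1y : HasDerivAt (fun ε : ℂ => τ₁ (x - sh a, y + sh ε)) (d2 τ₁ (x - sh a) y) 0 :=
    ((hs1.2.1 (x - sh a) y) 0).hasDerivAt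
  have hlin : HasDerivAt (fun ε : ℂ => b - ε) (-1) 0 := by
    simpa using (hasDerivAt_id (0:ℂ)).const_sub b
  have hG := (((hd2t2.const_mul (τ₁ (x - sh a, y + sh b))).const_mul b).sub
      (hlin.mul (hd1b.const_mul (τ₂ (x, y))))).sub
      ((hasDerivAt_id' (0:ℂ)).mul (hd1y.const_mul (τ₂ (x, y + sh b))))
  have hev : (fun ε : ℂ =>
      b * (τ₁ (x - sh a, y + sh b) * τ₂ (x, y + sh ε))
      - (b - ε) * (τ₂ (x, y) * τ₁ (x - sh a, y + sh b + sh ε))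
      - ε * (τ₂ (x, y + sh b) * τ₁ (x - sh a, y + sh ε)))
      =ᶠ[nhds (0:ℂ)] (fun _ => (0:ℂ)) := by
    filter_upwards [eventually_ne_nhds (Ne.symm hb)] with ε hεb
    rcases eq_or_ne ε 0 with rfl | hε0
    · simp only [sh_zero, add_zero, sub_zero, zero_mul, mul_zero]
      ring
    · have h := E5 ε hε0 hεb
      rw [show y + sh ε + sh b = y + sh b + sh ε from by abel] at h
      linear_combination h
  have hder := hG.deriv
  change deriv (fun ε : ℂ =>
      b * (τ₁ (x - sh a, y + sh b) * τ₂ (x, y + sh ε))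
      - (b - ε) * (τ₂ (x, y) * τ₁ (x - sh a, y + sh b + sh ε))
      - ε * (τ₂ (x, y + sh b) * τ₁ (x - sh a, y + sh ε))) 0 = _ at hder
  rw [Filter.EventuallyEq.deriv_eq hev] at hder
  simp only [deriv_const', sh_zero, add_zero, sub_zero, one_mul, zero_mul, mul_zero,
    neg_one_mul, add_zero] at hder
  field_simp
  linear_combination hder
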